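/- arXiv:1908.02194 — 12 statements merged into one kernel-verified Lean document; each statement's English description precedes it below -/
import Mathlib

section
/- If b ≥ 2 is odd and S_{[c,b]} has a fixed point, then c is even. -/
/-- The augmented generalized happy function: `c` plus the sum of squares of the base-`b`
digits of `a` (with the convention that it maps `0` to `c`). -/
def S (c b a : ℕ) : ℕ := c + ((Nat.digits b a).map (· ^ 2)).sum

theorem stmt_3 (b c : ℕ) (hb : 2 ≤ b) (hodd : Odd b)
    (h : ∃ a : ℕ, 0 < a ∧ S c b a = a) : Even c := by
  obtain ⟨a, _, hfix⟩ := h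
  -- a ≡ digit sum mod 2 since b ≡ 1 mod 2
  have hb1 : b % 2 = 1 := Nat.odd_iff.mp hodd
  have h1 : a ≡ (Nat.digits b a).sum [MOD 2] := Nat.modEq_digits_sum 2 b hb1 a
  -- sum of squares ≡ sum mod 2
  have h2 : ∀ l : List ℕ, (l.map (· ^ 2)).sum ≡ l.sum [MOD 2] := by
    intro l
    induction l with
    | nil => rfl
    | cons x xs ih =>
      simp only [List.map_cons, List.sum_cons]
      refine Nat.ModEq.add ?_ ih
      have h3 : x ^ 2 % 2 = (x % 2) ^ 2 % 2 := Nat.pow_mod x 2 2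
      unfold Nat.ModEq
      rcases Nat.mod_two_eq_zero_or_one x with h | h <;> simp [h3, h]
  have h4 := (h2 (Nat.digits b a)).trans h1.symm
  have h5 : c + ((Nat.digits b a).map (· ^ 2)).sum = a := hfix
  unfold Nat.ModEq at h4
  rw [Nat.even_iff]
  omega
end

section
/- If b ≥ 2 is odd, then there do not exist two consecutive non-negative integers c, c+1 such that both S_{[c,b]} and S_{[c+1,b]} have fixed points. Equivalently, every k-oasis base b has k = 1. -/
lemma key (b c a : ℕ) (hodd : Odd b) (ha : S c b a = a) : c % 2 = 0 := by
  have hb1 : b ≡ 1 [MOD 2] := by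
    obtain ⟨k, hk⟩ := hodd
    simp only [Nat.ModEq, hk]; omega
  have h1 : a ≡ (Nat.digits b a).sum [MOD 2] := by
    conv_lhs => rw [← Nat.ofDigits_digits b a]
    rw [← Nat.ofDigits_one (Nat.digits b a)]
    exact Nat.ofDigits_modEq' b 1 2 hb1 _
  have h2 : ((Nat.digits b a).map (· ^ 2)).sum ≡ (Nat.digits b a).sum [MOD 2] := by
    induction Nat.digits b a with
    | nil => rfl
    | cons x l ih =>
      simp only [List.map_cons, List.sum_cons]
      refine Nat.ModEq.add ?_ ih
      rcases Nat.mod_two_eq_zero_or_one x with h | h <;>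
        simp [Nat.ModEq, Nat.pow_mod, h]
  unfold S at ha
  have h3 : (c + ((Nat.digits b a).map (· ^ 2)).sum) % 2 = a % 2 := by rw [ha]
  unfold Nat.ModEq at h1 h2
  omega

theorem stmt_4 (b : ℕ) (hb : 2 ≤ b) (hodd : Odd b) :
    ¬ ∃ c : ℕ, (∃ a : ℕ, 0 < a ∧ S c b a = a) ∧
      (∃ a : ℕ, 0 < a ∧ S (c + 1) b a = a) := by
  rintro ⟨c, ⟨a1, -, h1⟩, ⟨a2, -, h2⟩⟩
  have k1 := key b c a1 hodd h1
  have k2 := key b (c + 1) a2 hodd h2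
  omega
end

section
/- Let b ≥ 6 be even and B = b/2. Then the five consecutive integers B²-4, B²-3, B²-2, B²-1, B² are augmenting constants whose associated functions all have fixed points; specifically (B-2)b+1, (B-1)b+2, Bb+2, (B-1)b+1, and Bb+1 are fixed points of S_{[B²-4,b]}, S_{[B²-3,b]}, S_{[B²-2,b]}, S_{[B²-1,b]}, and S_{[B²,b]} respectively. Hence {B²-4, B²-3, B²-2, B²-1, B²} is a 5-oasis base b. -/
lemma digits_two (b q r : ℕ) (hb : 2 ≤ b) (hq : 0 < q) (hqb : q < b) (hr : r < b) :
    Nat.digits b (q * b + r) = [r, q] := by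
  have h1 : 0 < q * b + r := by positivity
  have hmod : (q * b + r) % b = r := by
    rw [Nat.add_comm, Nat.add_mul_mod_self_right, Nat.mod_eq_of_lt hr]
  have hdiv : (q * b + r) / b = q := by
    rw [Nat.add_comm, Nat.add_mul_div_right _ _ (by omega : 0 < b),
      Nat.div_eq_of_lt hr, Nat.zero_add]
  rw [Nat.digits_def' hb h1, hmod, hdiv, Nat.digits_def' hb hq,
    Nat.mod_eq_of_lt hqb, Nat.div_eq_of_lt hqb, Nat.digits_zero]

lemma S_two (c b q r : ℕ) (hb : 2 ≤ b) (hq : 0 < q) (hqb : q < b) (hr : r < b) :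
    S c b (q * b + r) = c + r ^ 2 + q ^ 2 := by
  rw [S, digits_two b q r hb hq hqb hr]
  simp [add_assoc]

theorem stmt_5 (b : ℕ) (hb : 6 ≤ b) (heven : Even b) (B : ℕ) (hB : B = b / 2) :
    S (B ^ 2 - 4) b ((B - 2) * b + 1) = (B - 2) * b + 1 ∧
    S (B ^ 2 - 3) b ((B - 1) * b + 2) = (B - 1) * b + 2 ∧
    S (B ^ 2 - 2) b (B * b + 2) = B * b + 2 ∧
    S (B ^ 2 - 1) b ((B - 1) * b + 1) = (B - 1) * b + 1 ∧
    S (B ^ 2) b (B * b + 1) = B * b + 1 := by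
  have hb2 : b = 2 * B := by obtain ⟨k, hk⟩ := heven; omega
  have hB3 : 3 ≤ B := by omega
  have h2b : 2 ≤ b := by omega
  have h4 : 4 ≤ B ^ 2 := by nlinarith
  refine ⟨?_, ?_, ?_, ?_, ?_⟩ <;>
    rw [S_two _ _ _ _ h2b (by omega) (by omega) (by omega)] <;>
    subst hb2 <;>
    zify [h4, show (3:ℕ) ≤ B ^ 2 by omega, show (2:ℕ) ≤ B ^ 2 by omega,
      show (1:ℕ) ≤ B ^ 2 by omega, show (2:ℕ) ≤ B by omega,
      show (1:ℕ) ≤ B by omega] <;>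
    ring
end

section
/- Let b ≥ 6 be even. Then there exists a 5-oasis base b, i.e., five consecutive non-negative integers c for each of which S_{[c,b]} has a fixed point. -/
lemma digits_two_s6 {b d0 d1 : ℕ} (hb : 1 < b) (h0 : d0 < b) (h1 : 0 < d1) (h1b : d1 < b) :
    Nat.digits b (d1 * b + d0) = [d0, d1] := by
  rw [Nat.digits_def' hb (by positivity)]
  have hmod : (d1 * b + d0) % b = d0 := by
    rw [Nat.add_comm, Nat.add_mul_mod_self_right, Nat.mod_eq_of_lt h0]
  have hdiv : (d1 * b + d0) / b = d1 := by
    rw [Nat.add_comm, Nat.add_mul_div_right _ _ (by omega : 0 < b), Nat.div_eq_of_lt h0, Nat.zero_add]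
  rw [hmod, hdiv, Nat.digits_def' hb h1, Nat.mod_eq_of_lt h1b,
    Nat.div_eq_of_lt h1b, Nat.digits_zero]

lemma S_two_s6 {c b d0 d1 : ℕ} (hb : 1 < b) (h0 : d0 < b) (h1 : 0 < d1) (h1b : d1 < b) :
    S c b (d1 * b + d0) = c + (d0 ^ 2 + d1 ^ 2) := by
  rw [S, digits_two_s6 hb h0 h1 h1b]
  simp [List.sum_cons]

theorem stmt_6 (b : ℕ) (hb : 6 ≤ b) (heven : Even b) :
    ∃ c : ℕ, ∀ j < 5, ∃ a : ℕ, 0 < a ∧ S (c + j) b a = a := by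
  obtain ⟨m, hm⟩ := heven
  have hm3 : 3 ≤ m := by omega
  have hb1 : 1 < b := by omega
  have hK : 9 ≤ m * m := Nat.mul_le_mul hm3 hm3
  refine ⟨m * m - 4, ?_⟩
  intro j hj
  interval_cases j
  · refine ⟨(m + 2) * b + 1, by positivity, ?_⟩
    rw [S_two_s6 hb1 (by omega) (by omega) (by omega)]
    have h1 : (m + 2) ^ 2 = m * m + 4 * m + 4 := by ring
    have h2 : (m + 2) * b = 2 * (m * m) + 4 * m := by rw [hm]; ring
    omega
  · refine ⟨(m + 1) * b + 2, by positivity, ?_⟩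
    rw [S_two_s6 hb1 (by omega) (by omega) (by omega)]
    have h1 : (m + 1) ^ 2 = m * m + 2 * m + 1 := by ring
    have h2 : (m + 1) * b = 2 * (m * m) + 2 * m := by rw [hm]; ring
    omega
  · refine ⟨m * b + 2, by positivity, ?_⟩
    rw [S_two_s6 hb1 (by omega) (by omega) (by omega)]
    have h1 : m ^ 2 = m * m := by ring
    have h2 : m * b = 2 * (m * m) := by rw [hm]; ring
    omega
  · refine ⟨(m + 1) * b + 1, by positivity, ?_⟩
    rw [S_two_s6 hb1 (by omega) (by omega) (by omega)]
    have h1 : (m + 1) ^ 2 = m * m + 2 * m + 1 := by ring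
    have h2 : (m + 1) * b = 2 * (m * m) + 2 * m := by rw [hm]; ring
    omega
  · refine ⟨m * b + 1, by positivity, ?_⟩
    rw [S_two_s6 hb1 (by omega) (by omega) (by omega)]
    have h1 : m ^ 2 = m * m := by ring
    have h2 : m * b = 2 * (m * m) := by rw [hm]; ring
    omega
end

section
/- Fix b ≥ 2 and k ≥ 1. If there exists a k-oasis base b, then there exist infinitely many k-oases base b, i.e., infinitely many starting values c such that {c+1, ..., c+k} is a k-oasis base b. -/
/-!
If `a < b ^ m` is a fixed point of `S c b`, then prefixing a digit `1` in position `m` gives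
`a + b ^ m`, whose digit square sum is one larger while the number itself grew by `b ^ m`; so
`a + b ^ m` is a fixed point of `S (c + (b ^ m - 1)) b`. Taking `m` beyond all fixed points of
a given oasis shifts the whole oasis by `b ^ m - 1`, and letting `m → ∞` gives infinitely many.
-/

open Filter Nat

theorem Nat.digits_add_base_pow {b m a : ℕ} (hb : 1 < b) (ha : a < b ^ m) :
    digits b (a + b ^ m) = digits b a ++ List.replicate (m - (digits b a).length) 0 ++ [1] := by
  rw [← digits_of_lt b 1 one_ne_zero hb, digits_append_zeroes_append_digits hb one_pos,
    Nat.add_sub_cancel' ((digits_length_le_iff hb a).2 ha), mul_one]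

theorem S_add_base_pow {c b m a : ℕ} (hb : 1 < b) (ha : a < b ^ m) :
    S c b (a + b ^ m) = S c b a + 1 := by
  simp [S, digits_add_base_pow hb ha, add_assoc]

theorem S_add_base_pow_eq_self {c b m a : ℕ} (hb : 1 < b) (ha : a < b ^ m) (hfix : S c b a = a) :
    S (c + (b ^ m - 1)) b (a + b ^ m) = a + b ^ m := by
  have hpow : 1 ≤ b ^ m := one_le_pow m b (by omega)
  have := S_add_base_pow (c := c + (b ^ m - 1)) hb ha
  simp only [S] at hfix this ⊢
  omega

theorem eventually_exists_fixed_point_S_add_base_pow {c b : ℕ} (hb : 1 < b)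
    (h : ∃ a : ℕ, 0 < a ∧ S c b a = a) :
    ∀ᶠ m in atTop, ∃ a : ℕ, 0 < a ∧ S (c + (b ^ m - 1)) b a = a := by
  obtain ⟨a, -, hfix⟩ := h
  filter_upwards [eventually_ge_atTop a] with m hm
  have ha : a < b ^ m := Nat.lt_pow_self hb |>.trans_le (Nat.pow_le_pow_right (by omega) hm)
  exact ⟨a + b ^ m, by positivity, S_add_base_pow_eq_self hb ha hfix⟩

theorem stmt_7_general (b k : ℕ) (hb : 2 ≤ b)
    (h : ∃ c : ℕ, ∀ j, 1 ≤ j → j ≤ k → ∃ a : ℕ, 0 < a ∧ S (c + j) b a = a) :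
    {c : ℕ | ∀ j, 1 ≤ j → j ≤ k → ∃ a : ℕ, 0 < a ∧ S (c + j) b a = a}.Infinite := by
  obtain ⟨c, hc⟩ := h
  have hshift : ∀ᶠ m in atTop, ∀ j ∈ Finset.Icc 1 k,
      ∃ a : ℕ, 0 < a ∧ S (c + (b ^ m - 1) + j) b a = a := by
    refine (eventually_all_finset _).2 fun j hj => ?_
    obtain ⟨hj1, hjk⟩ := Finset.mem_Icc.1 hj
    simpa only [add_right_comm] using eventually_exists_fixed_point_S_add_base_pow hb (hc j hj1 hjk)
  refine Set.infinite_of_forall_exists_gt fun n => ?_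
  obtain ⟨m, hm, hnm⟩ := (hshift.and (eventually_gt_atTop n)).exists
  have hmb : m < b ^ m := Nat.lt_pow_self hb
  exact ⟨c + (b ^ m - 1), fun j hj1 hjk => hm j (Finset.mem_Icc.2 ⟨hj1, hjk⟩), by omega⟩

theorem stmt_7 (b k : ℕ) (hb : 2 ≤ b) (hk : 1 ≤ k)
    (h : ∃ c : ℕ, ∀ j, 1 ≤ j → j ≤ k → ∃ a : ℕ, 0 < a ∧ S (c + j) b a = a) :
    {c : ℕ | ∀ j, 1 ≤ j → j ≤ k → ∃ a : ℕ, 0 < a ∧ S (c + j) b a = a}.Infinite :=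
  stmt_7_general b k hb h
end

section
/- Fix b ≥ 2, let a be a fixed point of S_{[c,b]} with a < b^n, and let t be any positive integer. Then t·b^n + a is a fixed point of S_{[c', b]} where c' = c + t·b^n − S_{[0,b]}(t). -/
open Nat

lemma S_eq_add_S_zero (c b x : ℕ) : S c b x = c + S 0 b x := by
  simp only [S, zero_add]

lemma sum_map_digits_add_base_pow_mul {M : Type*} [AddMonoid M] {f : ℕ → M} (hf : f 0 = 0)
    {b n a : ℕ} (hb : 1 < b) (han : a < b ^ n) (t : ℕ) :
    ((digits b (a + b ^ n * t)).map f).sum =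
      ((digits b a).map f).sum + ((digits b t).map f).sum := by
  rcases t.eq_zero_or_pos with rfl | ht
  · simp
  obtain ⟨k, hk⟩ := Nat.exists_eq_add_of_le ((digits_length_le_iff hb a).mpr han)
  rw [hk, ← digits_append_zeroes_append_digits hb ht]
  simp [hf]

lemma S_zero_add_base_pow_mul {b n a : ℕ} (hb : 1 < b) (han : a < b ^ n) (t : ℕ) :
    S 0 b (a + b ^ n * t) = S 0 b a + S 0 b t := by
  simp only [S, zero_add]
  exact sum_map_digits_add_base_pow_mul (zero_pow two_ne_zero) hb han t

lemma S_zero_le_mul_base {b : ℕ} (hb : 1 < b) (t : ℕ) : S 0 b t ≤ t * b := by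
  calc S 0 b t = ((digits b t).map (· ^ 2)).sum := zero_add _
    _ ≤ ((digits b t).map (· * b)).sum :=
        List.sum_le_sum fun d hd => by
          rw [sq]; exact Nat.mul_le_mul_left d (digits_lt_base hb hd).le
    _ = (digits b t).sum * b := by simpa using List.sum_map_mul_right (digits b t) id b
    _ ≤ t * b := Nat.mul_le_mul_right b (digit_sum_le b t)

theorem stmt_8_general (b c n a t : ℕ) (hb : 2 ≤ b) (ha : 0 < a) (hfix : S c b a = a)
    (han : a < b ^ n) :
    S (c + t * b ^ n - S 0 b t) b (t * b ^ n + a) = t * b ^ n + a := by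
  have hn : 0 < n := Nat.pos_of_ne_zero fun h => by
    rw [h, pow_zero] at han
    omega
  have hSt : S 0 b t ≤ t * b ^ n :=
    (S_zero_le_mul_base hb t).trans (Nat.mul_le_mul_left t (Nat.le_self_pow hn.ne' b))
  have hsplit : S 0 b (t * b ^ n + a) = S 0 b a + S 0 b t := by
    rw [add_comm, mul_comm]; exact S_zero_add_base_pow_mul hb han t
  rw [S_eq_add_S_zero] at hfix ⊢
  omega

theorem stmt_8 (b c n a t : ℕ) (hb : 2 ≤ b) (ha : 0 < a) (hfix : S c b a = a)
    (han : a < b ^ n) (ht : 0 < t) :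
    S (c + t * b ^ n - S 0 b t) b (t * b ^ n + a) = t * b ^ n + a :=
  stmt_8_general b c n a t hb ha hfix han
end

section
/- Fix b ≥ 2 and a two-digit base-b number a = a_1·b + a_0 (with 1 ≤ a_1 ≤ b-1 and 0 ≤ a_0 ≤ b-1) which is a fixed point of S_{[c,b]}. Then c ≤ b²/4. -/
theorem stmt_9 (b c a₀ a₁ : ℕ) (hb : 2 ≤ b) (h₁ : 1 ≤ a₁) (h₁' : a₁ ≤ b - 1)
    (h₀ : a₀ ≤ b - 1) (hfix : S c b (a₁ * b + a₀) = a₁ * b + a₀) :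
    (c : ℚ) ≤ (b : ℚ) ^ 2 / 4 := by
  have hb1 : 1 < b := hb
  have h₁b : a₁ < b := lt_of_le_of_lt h₁' (Nat.sub_lt (by omega) one_pos)
  have h₀b : a₀ < b := lt_of_le_of_lt h₀ (Nat.sub_lt (by omega) one_pos)
  have hpos : 0 < a₁ * b + a₀ := by positivity
  have hd : Nat.digits b (a₁ * b + a₀) = [a₀, a₁] := by
    rw [Nat.digits_def' hb1 hpos]
    have h1 : (a₁ * b + a₀) % b = a₀ := by
      rw [Nat.add_comm, Nat.add_mul_mod_self_right, Nat.mod_eq_of_lt h₀b]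
    have h2 : (a₁ * b + a₀) / b = a₁ := by
      rw [Nat.add_comm, Nat.add_mul_div_right _ _ (by omega : 0 < b),
        Nat.div_eq_of_lt h₀b, Nat.zero_add]
    rw [h1, h2, Nat.digits_def' hb1 h₁, Nat.mod_eq_of_lt h₁b,
      Nat.div_eq_of_lt h₁b, Nat.digits_zero]
  rw [S, hd] at hfix
  simp at hfix
  have E : (c : ℚ) + (a₀ ^ 2 + a₁ ^ 2) = a₁ * b + a₀ := by exact_mod_cast hfix
  have ha : a₀ ≤ a₀ ^ 2 := Nat.le_self_pow two_ne_zero a₀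
  have ha' : (a₀ : ℚ) ≤ (a₀ : ℚ) ^ 2 := by exact_mod_cast ha
  nlinarith [sq_nonneg ((b : ℚ) - 2 * a₁)]
end

section
/- Let b ≥ 2, let c and ĉ be non-negative integers with |c − ĉ| ≤ 1, let a be a fixed point of S_{[c,b]} having at least 4 base-b digits, and let â be a fixed point of S_{[ĉ,b]}. Then â has the same number of base-b digits as a. -/
def fd (b a : ℕ) : ℕ := ((Nat.digits b a).map (· ^ 2)).sum


lemma fd_rec {b : ℕ} (hb : 2 ≤ b) (x : ℕ) : fd b x = (x % b) ^ 2 + fd b (x / b) := by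
  rcases Nat.eq_zero_or_pos x with rfl | hx
  · simp [fd]
  · rw [fd, Nat.digits_def' hb hx]; simp [fd]

lemma fd_pos {b : ℕ} (hb : 2 ≤ b) : ∀ x, 1 ≤ x → 1 ≤ fd b x := by
  intro x
  induction x using Nat.strong_induction_on with
  | _ x ih =>
    intro hx
    rw [fd_rec hb x]
    rcases Nat.eq_zero_or_pos (x % b) with h | h
    · have hd : b * (x / b) + x % b = x := Nat.div_add_mod x b
      have hq : 0 < x / b := by
        rcases Nat.eq_zero_or_pos (x / b) with h2 | h2
        · rw [h2] at hd; simp at hd; omega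
        · exact h2
      have := ih (x / b) (Nat.div_lt_self (by omega) (by omega)) hq
      omega
    · have : 1 ≤ (x % b) ^ 2 := Nat.one_le_pow _ _ h
      omega

lemma fd_le_mul {b : ℕ} (hb : 2 ≤ b) : ∀ x, fd b x ≤ (b - 1) * x := by
  intro x
  induction x using Nat.strong_induction_on with
  | _ x ih =>
    rcases Nat.eq_zero_or_pos x with rfl | hx
    · simp [fd]
    · rw [fd_rec hb x]
      have h1 : fd b (x / b) ≤ (b - 1) * (x / b) := ih _ (Nat.div_lt_self hx (by omega))
      have h2 : x % b ≤ b - 1 := by have := Nat.mod_lt x (show 0 < b by omega); omega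
      have h3 : b * (x / b) + x % b = x := Nat.div_add_mod x b
      have h4 : (x % b) ^ 2 ≤ (b - 1) * (x % b) := by
        rw [pow_two]; exact Nat.mul_le_mul_right _ h2
      calc (x % b) ^ 2 + fd b (x / b) ≤ (b - 1) * (x % b) + (b - 1) * (x / b) := by omega
        _ = (b - 1) * (x % b + x / b) := by ring
        _ ≤ (b - 1) * x := by
            refine Nat.mul_le_mul_left _ ?_
            have := Nat.div_le_self x b
            nlinarith [Nat.div_add_mod x b, Nat.one_le_iff_ne_zero.mpr (by omega : b ≠ 0)]

lemma fd_le_add {b : ℕ} (hb : 2 ≤ b) (x : ℕ) : fd b x ≤ x + (b - 1) * (b - 2) := by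
  obtain ⟨B, rfl⟩ : ∃ B, b = B + 2 := ⟨b - 2, by omega⟩
  rw [fd_rec hb x]
  have h1 : fd (B + 2) (x / (B + 2)) ≤ (B + 1) * (x / (B + 2)) := by
    simpa using fd_le_mul hb (x / (B + 2))
  have h2 : x % (B + 2) ≤ B + 1 := by have := Nat.mod_lt x (show 0 < B + 2 by omega); omega
  have h3 : (B + 2) * (x / (B + 2)) + x % (B + 2) = x := Nat.div_add_mod x (B + 2)
  have h4 : (x % (B + 2)) ^ 2 ≤ x % (B + 2) + (B + 1) * B := by
    have h6 : x % (B + 2) * (x % (B + 2)) ≤ (B + 1) * (x % (B + 2)) := Nat.mul_le_mul_right _ h2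
    have h7 : B * (x % (B + 2)) ≤ B * (B + 1) := Nat.mul_le_mul_left _ h2
    nlinarith
  have h5 : (B + 2 - 1) * (B + 2 - 2) = (B + 1) * B := by norm_num
  rw [h5]
  nlinarith



lemma fd_ge_lead {b : ℕ} (hb : 2 ≤ b) :
    ∀ k x, (b - 1) * b ^ k ≤ x → x < b ^ (k + 1) → (b - 1) ^ 2 ≤ fd b x := by
  intro k
  induction k with
  | zero =>
    intro x h1 h2
    simp at h1 h2
    rw [fd_rec hb x, Nat.mod_eq_of_lt (by simpa using h2)]
    have : (b - 1) ^ 2 ≤ x ^ 2 := Nat.pow_le_pow_left (by omega) 2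
    omega
  | succ k ih =>
    intro x h1 h2
    rw [fd_rec hb x]
    have hb0 : 0 < b := by omega
    have hq1 : (b - 1) * b ^ k ≤ x / b := by
      rw [Nat.le_div_iff_mul_le hb0]
      calc (b - 1) * b ^ k * b = (b - 1) * b ^ (k + 1) := by ring
        _ ≤ x := h1
    have hq2 : x / b < b ^ (k + 1) := by
      rw [Nat.div_lt_iff_lt_mul hb0]
      calc x < b ^ (k + 2) := h2
        _ = b ^ (k + 1) * b := by ring
    have := ih (x / b) hq1 hq2
    omega

lemma fd_pow_add {b : ℕ} (hb : 2 ≤ b) :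
    ∀ n r, r < b ^ n → fd b (b ^ n + r) = 1 + fd b r := by
  intro n
  induction n with
  | zero =>
    intro r hr
    simp at hr
    subst hr
    rw [show b ^ 0 + 0 = 1 by norm_num, fd_rec hb 1]
    have h1 : 1 % b = 1 := Nat.mod_eq_of_lt (by omega)
    have h2 : 1 / b = 0 := Nat.div_eq_of_lt (by omega)
    rw [h1, h2]
    simp [fd]
  | succ n ih =>
    intro r hr
    have hb0 : 0 < b := by omega
    rw [fd_rec hb (b ^ (n + 1) + r)]
    have h0 : b ^ (n + 1) % b = 0 := by
      rw [pow_succ, mul_comm]; exact Nat.mul_mod_right b _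
    have hm : (b ^ (n + 1) + r) % b = r % b := by
      simp [Nat.add_mod, h0]
    have hd : (b ^ (n + 1) + r) / b = b ^ n + r / b := by
      rw [pow_succ, mul_comm (b ^ n) b, Nat.mul_add_div hb0]
    rw [hm, hd]
    have hrb : r / b < b ^ n := by
      rw [Nat.div_lt_iff_lt_mul hb0]
      calc r < b ^ (n + 1) := hr
        _ = b ^ n * b := by ring
    rw [ih (r / b) hrb]
    rw [fd_rec hb r]
    ring

lemma fd_two_pow_sub_one : ∀ k, fd 2 (2 ^ k - 1) = k := by
  intro k
  induction k with
  | zero => simp [fd]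
  | succ k ih =>
    have h2 : (2:ℕ) ^ (k + 1) = 2 * 2 ^ k := by ring
    have hpos : 1 ≤ 2 ^ k := Nat.one_le_two_pow
    rw [fd_rec (le_refl 2) (2 ^ (k + 1) - 1)]
    have hm : (2 ^ (k + 1) - 1) % 2 = 1 := by omega
    have hd : (2 ^ (k + 1) - 1) / 2 = 2 ^ k - 1 := by omega
    rw [hm, hd, ih]
    ring

lemma fd_le_len {b : ℕ} (hb : 2 ≤ b) (x : ℕ) :
    fd b x ≤ (Nat.digits b x).length * (b - 1) ^ 2 := by
  unfold fd
  calc ((Nat.digits b x).map (· ^ 2)).sum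
      ≤ ((Nat.digits b x).map (· ^ 2)).length * ((b - 1) ^ 2) := by
        apply List.sum_le_card_nsmul
        intro d hd
        simp only [List.mem_map] at hd
        obtain ⟨e, he, rfl⟩ := hd
        have := Nat.digits_lt_base (by omega) he
        exact Nat.pow_le_pow_left (by omega) 2
    _ = (Nat.digits b x).length * (b - 1) ^ 2 := by simp

lemma pow_fact1 {b : ℕ} (hb : 2 ≤ b) : ∀ j, (j + 5) * (b - 1) ^ 2 ≤ b ^ (j + 3) := by
  obtain ⟨B, rfl⟩ : ∃ B, b = B + 2 := ⟨b - 2, by omega⟩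
  intro j
  induction j with
  | zero =>
    simp
    nlinarith [sq_nonneg B]
  | succ j ih =>
    have h1 : (j + 1 + 5) * (B + 2 - 1) ^ 2 ≤ 2 * ((j + 5) * (B + 2 - 1) ^ 2) := by nlinarith [sq_nonneg (B+1)]
    calc (j + 1 + 5) * (B + 2 - 1) ^ 2 ≤ 2 * ((j + 5) * (B + 2 - 1) ^ 2) := h1
      _ ≤ 2 * (B + 2) ^ (j + 3) := by omega
      _ ≤ (B + 2) * (B + 2) ^ (j + 3) := Nat.mul_le_mul_right _ (by omega)
      _ = (B + 2) ^ (j + 1 + 3) := by ring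

lemma pow_fact2 {b : ℕ} (hb : 2 ≤ b) : ∀ j, (j + 4) * (b - 1) ≤ b ^ (j + 2) := by
  obtain ⟨B, rfl⟩ : ∃ B, b = B + 2 := ⟨b - 2, by omega⟩
  intro j
  induction j with
  | zero =>
    simp
    nlinarith
  | succ j ih =>
    have h1 : (j + 1 + 4) * (B + 2 - 1) ≤ 2 * ((j + 4) * (B + 2 - 1)) := by nlinarith
    calc (j + 1 + 4) * (B + 2 - 1) ≤ 2 * ((j + 4) * (B + 2 - 1)) := h1
      _ ≤ 2 * (B + 2) ^ (j + 2) := by omega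
      _ ≤ (B + 2) * (B + 2) ^ (j + 2) := Nat.mul_le_mul_right _ (by omega)
      _ = (B + 2) ^ (j + 1 + 2) := by ring



lemma adj {b k x y cx cy : ℕ} (hb : 2 ≤ b) (hk : 3 ≤ k)
    (hx1 : b ^ (k - 1) ≤ x) (hx2 : x < b ^ k) (hxf : cx + fd b x = x)
    (hy1 : b ^ k ≤ y) (hy2 : y < 2 * b ^ k) (hyf : cy + fd b y = y)
    (hcc : cy ≤ cx + 1) : False := by
  obtain ⟨B, rfl⟩ : ∃ B, b = B + 2 := ⟨b - 2, by omega⟩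
  obtain ⟨K, rfl⟩ : ∃ K, k = K + 3 := ⟨k - 3, by omega⟩
  have e1 : B + 2 - 1 = B + 1 := by omega
  have e2 : B + 2 - 2 = B := by omega
  have e3 : K + 3 - 1 = K + 2 := by omega
  rw [e3] at hx1
  have hr : y - (B + 2) ^ (K + 3) < (B + 2) ^ (K + 3) := by omega
  set r := y - (B + 2) ^ (K + 3) with hrdef
  have hyr : y = (B + 2) ^ (K + 3) + r := by omega
  have hfy : fd (B + 2) y = 1 + fd (B + 2) r := by rw [hyr]; exact fd_pow_add hb _ _ hr
  have heq : cy + 1 + fd (B + 2) r = (B + 2) ^ (K + 3) + r := by omega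
  have hfr : fd (B + 2) r ≤ r + (B + 1) * B := by
    have := fd_le_add hb r; rwa [e1, e2] at this
  have hkey : (B + 2) ^ (K + 3) ≤ cx + 2 + (B + 1) * B := by omega
  have hx0 : 1 ≤ x := le_trans (Nat.one_le_pow _ _ (by omega)) hx1
  have hfx : 1 ≤ fd (B + 2) x := fd_pos hb x hx0
  by_cases hB : B = 0
  · subst hB
    norm_num at hx2 hxf hfx hkey
    have hfx1 : fd 2 x = 1 := by omega
    have hxval : x = 2 ^ (K + 3) - 1 := by omega
    have h10 := fd_two_pow_sub_one (K + 3)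
    rw [← hxval] at h10
    omega
  · have hB1 : 1 ≤ B := by omega
    have hsq : (B + 2) ^ 2 ≤ (B + 2) ^ (K + 2) := Nat.pow_le_pow_right (by omega) (by omega)
    have hsq2 : (B + 1) * B + 1 ≤ (B + 2) ^ 2 := by nlinarith
    have hpk : (B + 1) * B + 1 ≤ (B + 2) ^ (K + 2) := le_trans hsq2 hsq
    have hpow : (B + 2) ^ (K + 3) = (B + 2) ^ (K + 2) * (B + 2) := by rw [← pow_succ]
    have hpow2 : (B + 2) ^ (K + 2) * (B + 2) = (B + 1) * (B + 2) ^ (K + 2) + (B + 2) ^ (K + 2) := by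
      ring
    have hlead : (B + 1) * (B + 2) ^ (K + 2) ≤ x := by
      have hxc : cx + 1 ≤ x := by omega
      linarith
    have hfl : (B + 1) ^ 2 ≤ fd (B + 2) x := by
      have := fd_ge_lead hb (K + 2) x (by rwa [e1]) hx2
      rwa [e1] at this
    have hexp : (B + 1) ^ 2 = (B + 1) * B + B + 1 := by ring
    linarith



lemma core {b c c2 a a2 n m : ℕ} (hb : 2 ≤ b) (hn : 4 ≤ n) (hm : 1 ≤ m)
    (han : b ^ (n - 1) ≤ a) (han' : a < b ^ n)
    (ham : b ^ (m - 1) ≤ a2) (ham' : a2 < b ^ m)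
    (hfa : c + fd b a = a) (hfa2 : c2 + fd b a2 = a2)
    (hfal : fd b a ≤ n * (b - 1) ^ 2) (hfa2l : fd b a2 ≤ m * (b - 1) ^ 2)
    (hc1 : c2 ≤ c + 1) (hc2 : c ≤ c2 + 1) : m = n := by
  obtain ⟨B, rfl⟩ : ∃ B, b = B + 2 := ⟨b - 2, by omega⟩
  obtain ⟨N, rfl⟩ : ∃ N, n = N + 4 := ⟨n - 4, by omega⟩
  have e1 : B + 2 - 1 = B + 1 := by omega
  have e2 : N + 4 - 1 = N + 3 := by omega
  rw [e2] at han
  rw [e1] at hfal hfa2l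
  have hfx : 1 ≤ fd (B + 2) a := fd_pos hb a (le_trans (Nat.one_le_pow _ _ (by omega)) han)
  have hfx2 : 1 ≤ fd (B + 2) a2 := fd_pos hb a2 (le_trans (Nat.one_le_pow _ _ (by omega)) ham)
  have pf1 : (N + 5) * (B + 1) ^ 2 ≤ (B + 2) ^ (N + 3) := by
    have := pow_fact1 hb N; rwa [e1] at this
  by_cases hmn : m = N + 4
  · exact hmn
  by_cases h1 : m = N + 5
  · subst h1
    exfalso
    rw [show N + 5 - 1 = N + 4 from by omega] at ham
    have hlt2 : a2 < 2 * (B + 2) ^ (N + 4) := by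
      have hp : (B + 2) ^ (N + 3) ≤ (B + 2) ^ (N + 4) :=
        Nat.pow_le_pow_right (by omega) (by omega)
      omega
    exact adj hb (show 3 ≤ N + 4 by omega)
      (by rw [show N + 4 - 1 = N + 3 from by omega]; exact han) han' hfa
      ham hlt2 hfa2 hc1
  by_cases h2 : m = N + 3
  · subst h2
    exfalso
    rw [show N + 3 - 1 = N + 2 from by omega] at ham
    have hlt2 : a < 2 * (B + 2) ^ (N + 3) := by
      have hle : (N + 4) * (B + 1) ^ 2 ≤ (N + 5) * (B + 1) ^ 2 :=
        Nat.mul_le_mul_right _ (by omega)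
      omega
    exact adj hb (show 3 ≤ N + 3 by omega)
      (by rw [show N + 3 - 1 = N + 2 from by omega]; exact ham) ham' hfa2
      han hlt2 hfa hc2
  exfalso
  rcases (by omega : m + 2 ≤ N + 4 ∨ N + 6 ≤ m) with hL | hG
  · -- a2 much smaller
    have hpow : (B + 2) ^ m ≤ (B + 2) ^ (N + 2) := Nat.pow_le_pow_right (by omega) (by omega)
    have hf2 : (N + 4) * (B + 1) ≤ (B + 2) ^ (N + 2) := by
      have := pow_fact2 hb N; rwa [e1] at this
    have hmul : (N + 4) * (B + 1) * (B + 1) ≤ (B + 2) ^ (N + 2) * (B + 1) :=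
      Nat.mul_le_mul_right _ hf2
    have hid1 : (N + 4) * (B + 1) ^ 2 = (N + 4) * (B + 1) * (B + 1) := by ring
    have hid2 : (B + 2) ^ (N + 3) = (B + 2) ^ (N + 2) * (B + 1) + (B + 2) ^ (N + 2) := by
      rw [show (B + 2) ^ (N + 3) = (B + 2) ^ (N + 2) * (B + 2) from by rw [← pow_succ]]
      ring
    have hb2m : 1 ≤ (B + 2) ^ m := Nat.one_le_pow _ _ (by omega)
    linarith
  · -- a2 much bigger
    have hpow : (B + 2) ^ (N + 4) ≤ (B + 2) ^ (m - 2) := Nat.pow_le_pow_right (by omega) (by omega)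
    have hf2 : m * (B + 1) ≤ (B + 2) ^ (m - 2) := by
      have := pow_fact2 hb (m - 4)
      rw [e1, show m - 4 + 4 = m from by omega, show m - 4 + 2 = m - 2 from by omega] at this
      exact this
    have hmul : m * (B + 1) * (B + 1) ≤ (B + 2) ^ (m - 2) * (B + 1) :=
      Nat.mul_le_mul_right _ hf2
    have hid1 : m * (B + 1) ^ 2 = m * (B + 1) * (B + 1) := by ring
    have hid2 : (B + 2) ^ (m - 1) = (B + 2) ^ (m - 2) * (B + 1) + (B + 2) ^ (m - 2) := by
      rw [show (B + 2) ^ (m - 1) = (B + 2) ^ (m - 2) * (B + 2) from by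
        rw [← pow_succ]; congr 1; omega]
      ring
    linarith



theorem stmt_10 (b c c2 a a2 : ℕ) (hb : 2 ≤ b)
    (hc : |(c : ℤ) - (c2 : ℤ)| ≤ 1)
    (ha : 0 < a) (ha2 : 0 < a2)
    (hfix : S c b a = a) (hfix' : S c2 b a2 = a2)
    (hlen : 4 ≤ (Nat.digits b a).length) :
    (Nat.digits b a2).length = (Nat.digits b a).length := by
  have hb1 : 1 < b := by omega
  have hfa : c + fd b a = a := hfix
  have hfa2 : c2 + fd b a2 = a2 := hfix'
  rw [abs_le] at hc
  have hc1 : c2 ≤ c + 1 := by omega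
  have hc2 : c ≤ c2 + 1 := by omega
  have hge : ∀ x : ℕ, 0 < x → b ^ ((Nat.digits b x).length - 1) ≤ x := by
    intro x hx
    have h := Nat.base_pow_length_digits_le b x hb1 (by omega)
    have hlp : 1 ≤ (Nat.digits b x).length := by
      have : Nat.digits b x ≠ [] := Nat.digits_ne_nil_iff_ne_zero.mpr (by omega)
      cases h' : Nat.digits b x with
      | nil => exact absurd h' this
      | cons d l => simp [h']
    rw [show (Nat.digits b x).length = ((Nat.digits b x).length - 1) + 1 from by omega,
      pow_succ] at h
    rw [mul_comm b x] at h
    exact Nat.le_of_mul_le_mul_right h (show 0 < b by omega)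
  have hm1 : 1 ≤ (Nat.digits b a2).length := by
    have : Nat.digits b a2 ≠ [] := Nat.digits_ne_nil_iff_ne_zero.mpr (by omega)
    cases h' : Nat.digits b a2 with
    | nil => exact absurd h' this
    | cons d l => simp [h']
  exact core hb hlen hm1 (hge a ha) (Nat.lt_base_pow_length_digits hb1)
    (hge a2 ha2) (Nat.lt_base_pow_length_digits hb1)
    hfa hfa2 (fd_le_len hb a) (fd_le_len hb a2) hc1 hc2
end

section
/- Let b ≥ 2, let c and ĉ be non-negative integers with |c − ĉ| ≤ 1, let a be a fixed point of S_{[c,b]} and â be a fixed point of S_{[ĉ,b]}. If a_i and â_i denote the i-th base-b digits of a and â respectively, then a_i = â_i for all i ≥ 3. -/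
def Q (b n : ℕ) : ℕ := ((Nat.digits b n).map (· ^ 2)).sum

lemma Q_rec (b n : ℕ) (hb : 2 ≤ b) : Q b n = (n % b) ^ 2 + Q b (n / b) := by
  rcases Nat.eq_zero_or_pos n with h | h
  · subst h; simp [Q]
  · unfold Q
    rw [Nat.digits_def' hb h]
    simp

lemma Q_succ (b : ℕ) (hb : 2 ≤ b) : ∀ n, Q b (n + 1) + 3 ≤ Q b n + 2 * b := by
  intro n
  induction n using Nat.strong_induction_on with
  | _ n ih =>
    have hb0 : 0 < b := by omega
    have hmod : n % b < b := Nat.mod_lt _ hb0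
    have hdm : b * (n / b) + n % b = n := Nat.div_add_mod n b
    rcases lt_or_ge (n % b + 1) b with h | h
    · have key := (Nat.div_mod_unique (a := n + 1) (d := n / b) (c := n % b + 1) hb0).mpr
        ⟨by omega, h⟩
      rw [Q_rec b (n + 1) hb, Q_rec b n hb, key.1, key.2]
      have : n % b + 1 ≤ b - 1 := by omega
      nlinarith [sq_nonneg (n % b)]
    · have hm : n % b = b - 1 := by omega
      have key := (Nat.div_mod_unique (a := n + 1) (d := n / b + 1) (c := 0) hb0).mpr
        ⟨by rw [Nat.mul_add, Nat.mul_one]; omega, by omega⟩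
      have hlt : n / b < n := Nat.div_lt_self (by omega) (by omega)
      have ihh := ih (n / b) hlt
      rw [Q_rec b (n + 1) hb, Q_rec b n hb, key.1, key.2]
      simp only [Nat.zero_pow, pow_two]
      omega

lemma Q_diff (b : ℕ) (hb : 2 ≤ b) (q m : ℕ) (h : q ≤ m) :
    (Q b m : ℤ) ≤ Q b q + ((m : ℤ) - q) * (2 * b - 3) := by
  induction m, h using Nat.le_induction with
  | base => simp
  | succ m hm ih =>
    have hs := Q_succ b hb m
    have hs' : (Q b (m + 1) : ℤ) + 3 ≤ Q b m + 2 * b := by exact_mod_cast hs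
    push_cast
    nlinarith [hs', ih]

lemma sq4 (b : ℤ) (hb : 2 ≤ b) : 4 ≤ b ^ 2 := by nlinarith

lemma cube3 (b : ℤ) (hb : 2 ≤ b) : 0 ≤ b ^ 3 - 2 * b + 3 := by nlinarith [sq4 b hb]

lemma threebsq (b : ℤ) (hb : 2 ≤ b) : 0 ≤ 3 * b ^ 2 - 4 * b := by nlinarith

lemma xsq (b x : ℤ) (hx : 0 ≤ x) : x - x ^ 2 ≤ 0 := by
  rcases (by omega : x = 0 ∨ 1 ≤ x) with h | h
  · simp [h]
  · nlinarith

lemma key_ineq (b x y z x' y' z' Qq Qq' q q' cc cc' : ℤ)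
    (hb : 2 ≤ b)
    (hx : 0 ≤ x) (hxb : x ≤ b - 1) (hy : 0 ≤ y) (hyb : y ≤ b - 1)
    (hz : 0 ≤ z) (hzb : z ≤ b - 1)
    (hx' : 0 ≤ x') (hxb' : x' ≤ b - 1) (hy' : 0 ≤ y') (hyb' : y' ≤ b - 1)
    (hz' : 0 ≤ z') (hzb' : z' ≤ b - 1)
    (hq : q < q')
    (hQd : Qq' ≤ Qq + (q' - q) * (2 * b - 3))
    (hcc : cc + (x ^ 2 + y ^ 2 + z ^ 2) + Qq = x + b * y + b ^ 2 * z + b ^ 3 * q)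
    (hcc' : cc' + (x' ^ 2 + y' ^ 2 + z' ^ 2) + Qq' = x' + b * y' + b ^ 2 * z' + b ^ 3 * q') :
    cc + 2 ≤ cc' := by
  have hb0 : (0:ℤ) ≤ b := by omega
  have hbb : 4 ≤ b ^ 2 := sq4 b hb
  have hb3 : 0 ≤ b ^ 3 - 2 * b + 3 := cube3 b hb
  have h1 : x - x ^ 2 ≤ 0 := xsq b x hx
  have h2 : 4 * (b * y - y ^ 2) ≤ b ^ 2 := by linarith [sq_nonneg (b - 2 * y)]
  have h3 : b ^ 2 * z - z ^ 2 ≤ (b - 1) * (b ^ 2 - b + 1) := by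
    have hzz : (0:ℤ) ≤ b ^ 2 - b + 1 - z := by linarith [sq_nonneg (b - 1)]
    have P := mul_nonneg (by omega : (0:ℤ) ≤ b - 1 - z) hzz
    linarith [P]
  have h4 : -((b - 1) * (b - 2)) ≤ x' - x' ^ 2 := by
    have P1 := mul_nonneg (by omega : (0:ℤ) ≤ b - 1 - x') hx'
    have P2 := mul_nonneg (by omega : (0:ℤ) ≤ b - 2) (by omega : (0:ℤ) ≤ b - 1 - x')
    linarith [P1, P2]
  have h5 : 0 ≤ b * y' - y' ^ 2 := by
    have P := mul_nonneg hy' (by omega : (0:ℤ) ≤ b - y')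
    linarith [P]
  have h6 : 0 ≤ b ^ 2 * z' - z' ^ 2 := by
    have hzz : (0:ℤ) ≤ b ^ 2 - z' := by linarith [sq_nonneg (b - 1)]
    have P := mul_nonneg hz' hzz
    linarith [P]
  have hG : b ^ 3 - 2 * b + 3 ≤ b ^ 3 * (q' - q) - (Qq' - Qq) := by
    have h7 : 0 ≤ (q' - q - 1) * (b ^ 3 - 2 * b + 3) := mul_nonneg (by omega) hb3
    linarith [h7, hQd]
  have h8 : 0 ≤ 3 * b ^ 2 - 4 * b := threebsq b hb
  linarith [h1, h2, h3, h4, h5, h6, hG, hcc, hcc', h8]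

lemma getD_digits (b : ℕ) (hb : 2 ≤ b) : ∀ i n, (Nat.digits b n).getD i 0 = n / b ^ i % b := by
  intro i
  induction i with
  | zero =>
    intro n
    rcases Nat.eq_zero_or_pos n with h | h
    · subst h; simp
    · rw [Nat.digits_def' hb h]; simp
  | succ i ih =>
    intro n
    rcases Nat.eq_zero_or_pos n with h | h
    · subst h; simp
    · rw [Nat.digits_def' hb h]
      simp only [List.getD_cons_succ, ih]
      rw [Nat.div_div_eq_div_mul, ← pow_succ']

lemma fixc (b c a : ℕ) (hb : 2 ≤ b) (hfix : S c b a = a) :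
    (c : ℤ) + (((a % b : ℕ) : ℤ) ^ 2 + ((a / b % b : ℕ) : ℤ) ^ 2 + ((a / b / b % b : ℕ) : ℤ) ^ 2)
      + (Q b (a / b / b / b) : ℤ)
    = ((a % b : ℕ) : ℤ) + (b : ℤ) * ((a / b % b : ℕ) : ℤ)
      + (b : ℤ) ^ 2 * ((a / b / b % b : ℕ) : ℤ)
      + (b : ℤ) ^ 3 * ((a / b / b / b : ℕ) : ℤ) := by
  have hfa : c + Q b a = a := hfix
  rw [Q_rec b a hb, Q_rec b (a / b) hb, Q_rec b (a / b / b) hb] at hfa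
  have hfaZ : (c : ℤ) + (((a % b : ℕ) : ℤ) ^ 2 + (((a / b % b : ℕ) : ℤ) ^ 2
      + (((a / b / b % b : ℕ) : ℤ) ^ 2 + (Q b (a / b / b / b) : ℤ)))) = (a : ℤ) := by
    exact_mod_cast hfa
  have e0 : (b : ℤ) * ((a / b : ℕ) : ℤ) + ((a % b : ℕ) : ℤ) = (a : ℤ) := by
    exact_mod_cast Nat.div_add_mod a b
  have e1 : (b : ℤ) * ((a / b / b : ℕ) : ℤ) + ((a / b % b : ℕ) : ℤ) = ((a / b : ℕ) : ℤ) := by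
    exact_mod_cast Nat.div_add_mod (a / b) b
  have e2 : (b : ℤ) * ((a / b / b / b : ℕ) : ℤ) + ((a / b / b % b : ℕ) : ℤ)
      = ((a / b / b : ℕ) : ℤ) := by
    exact_mod_cast Nat.div_add_mod (a / b / b) b
  have eA : (a : ℤ) = ((a % b : ℕ) : ℤ) + (b : ℤ) * ((a / b % b : ℕ) : ℤ)
      + (b : ℤ) ^ 2 * ((a / b / b % b : ℕ) : ℤ)
      + (b : ℤ) ^ 3 * ((a / b / b / b : ℕ) : ℤ) := by
    rw [← e0, ← e1, ← e2]; ring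
  linarith [hfaZ, eA]

theorem stmt_12 (b c c2 a a2 : ℕ) (hb : 2 ≤ b)
    (hc : |(c : ℤ) - (c2 : ℤ)| ≤ 1)
    (ha : 0 < a) (ha2 : 0 < a2)
    (hfix : S c b a = a) (hfix' : S c2 b a2 = a2) :
    ∀ i, 3 ≤ i → (Nat.digits b a).getD i 0 = (Nat.digits b a2).getD i 0 := by
  have hb0 : 0 < b := by omega
  have habs := abs_le.mp hc
  have e1 := fixc b c a hb hfix
  have e2 := fixc b c2 a2 hb hfix'
  have m0 := Nat.mod_lt a hb0
  have m1 := Nat.mod_lt (a / b) hb0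
  have m2 := Nat.mod_lt (a / b / b) hb0
  have m0' := Nat.mod_lt a2 hb0
  have m1' := Nat.mod_lt (a2 / b) hb0
  have m2' := Nat.mod_lt (a2 / b / b) hb0
  have hbZ : (2 : ℤ) ≤ (b : ℤ) := by exact_mod_cast hb
  have hq : a / b / b / b = a2 / b / b / b := by
    by_contra hne
    rcases Nat.lt_or_ge (a / b / b / b) (a2 / b / b / b) with h | h
    · have hQd := Q_diff b hb (a / b / b / b) (a2 / b / b / b) h.le
      have := key_ineq (b : ℤ) _ _ _ _ _ _ _ _ _ _ (c : ℤ) (c2 : ℤ) hbZ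
        (Nat.cast_nonneg _) (by omega) (Nat.cast_nonneg _) (by omega)
        (Nat.cast_nonneg _) (by omega) (Nat.cast_nonneg _) (by omega)
        (Nat.cast_nonneg _) (by omega) (Nat.cast_nonneg _) (by omega)
        (by exact_mod_cast h) hQd e1 e2
      omega
    · have h' : a2 / b / b / b < a / b / b / b := by omega
      have hQd := Q_diff b hb (a2 / b / b / b) (a / b / b / b) h'.le
      have := key_ineq (b : ℤ) _ _ _ _ _ _ _ _ _ _ (c2 : ℤ) (c : ℤ) hbZ
        (Nat.cast_nonneg _) (by omega) (Nat.cast_nonneg _) (by omega)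
        (Nat.cast_nonneg _) (by omega) (Nat.cast_nonneg _) (by omega)
        (Nat.cast_nonneg _) (by omega) (Nat.cast_nonneg _) (by omega)
        (by exact_mod_cast h') hQd e2 e1
      omega
  intro i hi
  obtain ⟨k, rfl⟩ : ∃ k, i = 3 + k := ⟨i - 3, by omega⟩
  rw [getD_digits b hb, getD_digits b hb]
  have key : ∀ n : ℕ, n / b ^ (3 + k) = n / b / b / b / b ^ k := by
    intro n
    rw [Nat.div_div_eq_div_mul, Nat.div_div_eq_div_mul, Nat.div_div_eq_div_mul]
    congr 1
    ring
  rw [key a, key a2, hq]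
end

section
/- Let b ≥ 2. If there exists a k-oasis base b, then k ≤ b³/2 + b²/2 − b. -/
namespace Stmt14Aux

/-- sum of squares of base-b digits -/
def dsq (b a : ℕ) : ℕ := ((Nat.digits b a).map (· ^ 2)).sum

lemma dsq_step {b : ℕ} (hb : 2 ≤ b) (a : ℕ) :
    dsq b a = (a % b) ^ 2 + dsq b (a / b) := by
  rcases Nat.eq_zero_or_pos a with h | h
  · simp [h, dsq]
  · rw [dsq, Nat.digits_def' (by omega : 1 < b) h]
    simp [dsq]

lemma dsq_succ_le {b : ℕ} (hb : 2 ≤ b) : ∀ m, dsq b (m + 1) ≤ dsq b m + (2 * b - 3) := by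
  intro m
  induction m using Nat.strong_induction_on with
  | _ m ih =>
    have hb0 : 0 < b := by omega
    have hmd : b * (m / b) + m % b = m := Nat.div_add_mod m b
    have hrb : m % b < b := Nat.mod_lt _ hb0
    rcases lt_or_ge (m % b + 1) b with hlt | hge
    · -- no carry
      have e1 : m + 1 = (m % b + 1) + b * (m / b) := by omega
      have ed : (m + 1) / b = m / b := by
        rw [e1, Nat.add_mul_div_left _ _ hb0, Nat.div_eq_of_lt hlt, Nat.zero_add]
      have em : (m + 1) % b = m % b + 1 := by
        rw [e1, Nat.add_mul_mod_self_left, Nat.mod_eq_of_lt hlt]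
      rw [dsq_step hb (m + 1), dsq_step hb m, em, ed]
      have hsq : (m % b + 1) ^ 2 ≤ (m % b) ^ 2 + (2 * b - 3) := by
        have : (m % b + 1) ^ 2 = (m % b) ^ 2 + (2 * (m % b) + 1) := by ring
        rw [this]
        exact Nat.add_le_add_left (by omega) _
      omega
    · -- carry
      have hr : m % b = b - 1 := by omega
      have e1 : m + 1 = b * (m / b + 1) := by
        have : b * (m / b + 1) = b * (m / b) + b := by ring
        omega
      have ed : (m + 1) / b = m / b + 1 := by
        rw [e1, Nat.mul_div_cancel_left _ hb0]
      have em : (m + 1) % b = 0 := by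
        rw [e1, Nat.mul_mod_right]
      have hm1 : 1 ≤ m := by omega
      have hlt' : m / b < m := Nat.div_lt_self hm1 (by omega)
      have h1 := ih (m / b) hlt'
      rw [dsq_step hb (m + 1), dsq_step hb m, em, ed]
      have : (0:ℕ) ^ 2 + dsq b (m / b + 1) ≤ dsq b (m / b) + (2 * b - 3) := by
        simpa using h1
      omega

/-- the three low "t"-values and the high part -/
def t0 (b a : ℕ) : ℕ := (a % b) * (a % b - 1)
def t1 (b a : ℕ) : ℕ := (a / b % b) * (b - a / b % b)
def t2 (b a : ℕ) : ℕ := (a / b / b % b) * (b * b - a / b / b % b)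
def hi (b a : ℕ) : ℕ := a / b / b / b

def VZ (b m : ℕ) : ℤ := (b:ℤ)^3 * m - dsq b m
def wZ (b a : ℕ) : ℤ := -(t0 b a : ℤ) + (t1 b a : ℤ) + (t2 b a : ℤ)

lemma cast_t0 {b a : ℕ} : (t0 b a : ℤ) = (a % b : ℕ) * ((a % b : ℕ) - 1) := by
  rcases Nat.eq_zero_or_pos (a % b) with h | h
  · simp [t0, h]
  · rw [t0]
    push_cast [Nat.cast_sub h]
    ring

lemma cast_t1 {b a : ℕ} (hb : 2 ≤ b) : (t1 b a : ℤ) = (a / b % b : ℕ) * ((b:ℤ) - (a / b % b : ℕ)) := by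
  have h : a / b % b ≤ b := le_of_lt (Nat.mod_lt _ (by omega))
  rw [t1]
  push_cast [Nat.cast_sub h]
  ring

lemma cast_t2 {b a : ℕ} (hb : 2 ≤ b) :
    (t2 b a : ℤ) = (a / b / b % b : ℕ) * ((b:ℤ) * b - (a / b / b % b : ℕ)) := by
  have h : a / b / b % b ≤ b * b := by
    have := Nat.mod_lt (a / b / b) (show 0 < b by omega)
    nlinarith
  rw [t2]
  push_cast [Nat.cast_sub h]
  ring

lemma main_decomp {b a x : ℕ} (hb : 2 ≤ b) (hax : x + dsq b a = a) :
    (x:ℤ) = wZ b a + VZ b (hi b a) := by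
  have hdsq : dsq b a = (a % b) ^ 2 + ((a / b % b) ^ 2 + ((a / b / b % b) ^ 2 + dsq b (a / b / b / b))) := by
    rw [dsq_step hb a, dsq_step hb (a / b), dsq_step hb (a / b / b)]
  have e3 : a / b / b % b + b * (a / b / b / b) = a / b / b := Nat.mod_add_div _ _
  have e2 : a / b % b + b * (a / b / b) = a / b := Nat.mod_add_div _ _
  have e1 : a % b + b * (a / b) = a := Nat.mod_add_div _ _
  rw [← e3] at e2
  rw [← e2] at e1
  rw [hdsq] at hax
  have hxZ : (x:ℤ) + (((a % b : ℕ):ℤ) ^ 2 + (((a / b % b : ℕ):ℤ) ^ 2 + (((a / b / b % b : ℕ):ℤ) ^ 2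
      + (dsq b (a / b / b / b) : ℤ)))) = (a:ℤ) := by exact_mod_cast hax
  have haZ : ((a % b : ℕ):ℤ) + b * (((a / b % b : ℕ):ℤ) + b * (((a / b / b % b : ℕ):ℤ)
      + b * ((a / b / b / b : ℕ):ℤ))) = (a:ℤ) := by exact_mod_cast e1
  rw [wZ, VZ, hi, cast_t0, cast_t1 hb, cast_t2 hb]
  linear_combination hxZ - haZ

lemma wZ_lower {b a : ℕ} (hb : 2 ≤ b) : -(((b:ℤ) - 1) * ((b:ℤ) - 2)) ≤ wZ b a := by
  have h0 : (a % b : ℕ) < b := Nat.mod_lt _ (by omega)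
  have h0' : ((a % b : ℕ) : ℤ) ≤ (b:ℤ) - 1 := by
    have : ((a % b : ℕ):ℤ) < (b:ℤ) := by exact_mod_cast h0
    linarith
  have h0'' : (0:ℤ) ≤ ((a % b : ℕ) : ℤ) := Int.natCast_nonneg _
  have ht1 : (0:ℤ) ≤ (t1 b a : ℤ) := Int.natCast_nonneg _
  have ht2 : (0:ℤ) ≤ (t2 b a : ℤ) := Int.natCast_nonneg _
  have ht0 : (t0 b a : ℤ) ≤ ((b:ℤ) - 1) * ((b:ℤ) - 2) := by
    rw [cast_t0]
    nlinarith
  rw [wZ]; linarith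

lemma wZ_upper {b a : ℕ} (hb : 2 ≤ b) :
    4 * wZ b a ≤ 4 * ((b:ℤ) - 1) * ((b:ℤ)^2 - b + 1) + (b:ℤ)^2 := by
  have ht0 : (0:ℤ) ≤ (t0 b a : ℤ) := Int.natCast_nonneg _
  have h1 : (a / b % b : ℕ) < b := Nat.mod_lt _ (by omega)
  have h1' : ((a / b % b : ℕ) : ℤ) ≤ (b:ℤ) - 1 := by
    have : ((a / b % b : ℕ):ℤ) < (b:ℤ) := by exact_mod_cast h1
    linarith
  have h1'' : (0:ℤ) ≤ ((a / b % b : ℕ) : ℤ) := Int.natCast_nonneg _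
  have h2 : (a / b / b % b : ℕ) < b := Nat.mod_lt _ (by omega)
  have h2' : ((a / b / b % b : ℕ) : ℤ) ≤ (b:ℤ) - 1 := by
    have : ((a / b / b % b : ℕ):ℤ) < (b:ℤ) := by exact_mod_cast h2
    linarith
  have h2'' : (0:ℤ) ≤ ((a / b / b % b : ℕ) : ℤ) := Int.natCast_nonneg _
  have ht1 : 4 * (t1 b a : ℤ) ≤ (b:ℤ)^2 := by
    rw [cast_t1 hb]
    nlinarith [sq_nonneg ((b:ℤ) - 2 * ((a / b % b : ℕ) : ℤ))]
  have ht2 : (t2 b a : ℤ) ≤ ((b:ℤ) - 1) * ((b:ℤ)^2 - b + 1) := by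
    rw [cast_t2 hb]
    nlinarith [mul_nonneg (by linarith : (0:ℤ) ≤ (b:ℤ) - 1 - ((a / b / b % b : ℕ) : ℤ))
      (by nlinarith : (0:ℤ) ≤ (b:ℤ)^2 - b + 1 - ((a / b / b % b : ℕ) : ℤ))]
  rw [wZ]; linarith

lemma VZ_gap {b : ℕ} (hb : 2 ≤ b) : ∀ {m m' : ℕ}, m < m' →
    VZ b m + ((b:ℤ)^3 - 2 * b + 3) ≤ VZ b m' := by
  have step : ∀ m : ℕ, VZ b m + ((b:ℤ)^3 - 2 * b + 3) ≤ VZ b (m + 1) := by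
    intro m
    have h := dsq_succ_le hb m
    have h3 : dsq b (m + 1) + 3 ≤ dsq b m + 2 * b := by omega
    have h3' : (dsq b (m + 1) : ℤ) + 3 ≤ (dsq b m : ℤ) + 2 * b := by exact_mod_cast h3
    rw [VZ, VZ]
    push_cast
    linarith
  have hbZ : (2:ℤ) ≤ (b:ℤ) := by exact_mod_cast hb
  have hG : (0:ℤ) ≤ (b:ℤ)^3 - 2 * b + 3 := by
    nlinarith [mul_le_mul_of_nonneg_left hbZ (by positivity : (0:ℤ) ≤ (b:ℤ)^2),
      mul_le_mul_of_nonneg_left hbZ (by positivity : (0:ℤ) ≤ (b:ℤ))]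
  intro m m' h
  induction m' with
  | zero => omega
  | succ n ihn =>
    rcases Nat.lt_succ_iff_lt_or_eq.mp h with h' | h'
    · have h1 := ihn h'
      have h2 := step n
      linarith
    · subst h'
      exact step m

lemma no_cross {b a a' x : ℕ} (hb : 2 ≤ b) (hax : x + dsq b a = a)
    (hax' : (x + 1) + dsq b a' = a') : hi b a' = hi b a := by
  have E : (x:ℤ) = wZ b a + VZ b (hi b a) := main_decomp hb hax
  have E' : (x:ℤ) + 1 = wZ b a' + VZ b (hi b a') := by
    have := main_decomp hb hax'
    push_cast at this
    linarith
  have hbZ : (2:ℤ) ≤ (b:ℤ) := by exact_mod_cast hb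
  by_contra hne
  rcases lt_or_gt_of_ne hne with hlt | hgt
  · -- hi a' < hi a
    have hgap := VZ_gap hb hlt
    have u1 := wZ_upper (a := a') hb
    have l1 := wZ_lower (a := a) hb
    nlinarith [sq_nonneg ((b:ℤ) - 2)]
  · -- hi a < hi a'
    have hgap := VZ_gap hb hgt
    have u1 := wZ_upper (a := a) hb
    have l1 := wZ_lower (a := a') hb
    nlinarith [sq_nonneg ((b:ℤ) - 2)]

end Stmt14Aux

open Stmt14Aux Finset in
theorem stmt_14 (b k : ℕ) (hb : 2 ≤ b)
    (h : ∃ c : ℕ, ∀ j, 1 ≤ j → j ≤ k → ∃ a : ℕ, 0 < a ∧ S (c + j) b a = a) :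
    (k : ℚ) ≤ (b : ℚ) ^ 3 / 2 + (b : ℚ) ^ 2 / 2 - b := by
  obtain ⟨c, hc⟩ := h
  have h2 : ∀ j : ℕ, ∃ a : ℕ, (1 ≤ j ∧ j ≤ k → (c + j) + dsq b a = a) := by
    intro j
    by_cases hj : 1 ≤ j ∧ j ≤ k
    · obtain ⟨a, _, ha⟩ := hc j hj.1 hj.2
      exact ⟨a, fun _ => ha⟩
    · exact ⟨0, fun hj' => absurd hj' hj⟩
  choose A hA using h2
  -- all high parts equal
  have key : ∀ j, 1 ≤ j → j + 1 ≤ k → hi b (A (j + 1)) = hi b (A j) := by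
    intro j hj hjk
    have h1 : (c + j) + dsq b (A j) = A j := hA j ⟨hj, by omega⟩
    have h2' : (c + (j + 1)) + dsq b (A (j + 1)) = A (j + 1) := hA (j + 1) ⟨by omega, hjk⟩
    have h2'' : ((c + j) + 1) + dsq b (A (j + 1)) = A (j + 1) := by omega
    exact no_cross hb h1 h2''
  have Mconst : ∀ j, 1 ≤ j → j ≤ k → hi b (A j) = hi b (A 1) := by
    intro j
    induction j with
    | zero => omega
    | succ n ihn =>
      intro h1 h2'
      rcases Nat.eq_zero_or_pos n with rfl | hn
      · rfl
      · rw [key n (by omega) (by omega), ihn (by omega) (by omega)]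
  -- decomposition for each j
  have E : ∀ j, 1 ≤ j → j ≤ k → ((c : ℤ) + j) = wZ b (A j) + VZ b (hi b (A 1)) := by
    intro j h1 h2'
    have := main_decomp hb (hA j ⟨h1, h2'⟩)
    rw [Mconst j h1 h2'] at this
    push_cast at this ⊢
    linarith
  -- the injection into the product of value sets
  set F0 : Finset ℕ := (range b).image (fun d => d * (d - 1)) with hF0
  set F1 : Finset ℕ := (range (b / 2 + 1)).image (fun d => d * (b - d)) with hF1
  set F2 : Finset ℕ := (range b).image (fun d => d * (b * b - d)) with hF2
  have hb0 : 0 < b := by omega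
  have hmaps : ∀ j ∈ Icc 1 k, (t0 b (A j), t1 b (A j), t2 b (A j)) ∈ F0 ×ˢ (F1 ×ˢ F2) := by
    intro j hj
    refine Finset.mem_product.mpr ⟨?_, Finset.mem_product.mpr ⟨?_, ?_⟩⟩
    · exact Finset.mem_image.mpr ⟨A j % b, Finset.mem_range.mpr (Nat.mod_lt _ hb0), rfl⟩
    · set d := A j / b % b with hd
      have hdb : d < b := Nat.mod_lt _ hb0
      rcases le_or_gt d (b / 2) with hle | hgt
      · exact Finset.mem_image.mpr ⟨d, Finset.mem_range.mpr (by omega), rfl⟩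
      · refine Finset.mem_image.mpr ⟨b - d, Finset.mem_range.mpr (by omega), ?_⟩
        show (b - d) * (b - (b - d)) = t1 b (A j)
        rw [Nat.sub_sub_self (le_of_lt hdb), mul_comm]
        rfl
    · exact Finset.mem_image.mpr ⟨A j / b / b % b, Finset.mem_range.mpr (Nat.mod_lt _ hb0), rfl⟩
  have hinj : Set.InjOn (fun j => (t0 b (A j), t1 b (A j), t2 b (A j))) ↑(Icc 1 k) := by
    intro j hj j' hj' heq
    simp only [Finset.coe_Icc, Set.mem_Icc] at hj hj'
    have h0 : t0 b (A j) = t0 b (A j') := congrArg Prod.fst heq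
    have h1 : t1 b (A j) = t1 b (A j') := congrArg Prod.fst (congrArg Prod.snd heq)
    have h2' : t2 b (A j) = t2 b (A j') := congrArg Prod.snd (congrArg Prod.snd heq)
    have hw : wZ b (A j) = wZ b (A j') := by rw [wZ, wZ, h0, h1, h2']
    have e1 := E j hj.1 hj.2
    have e2 := E j' hj'.1 hj'.2
    rw [hw] at e1
    have : (j : ℤ) = j' := by linarith
    exact_mod_cast this
  have hcard : (Icc 1 k).card ≤ (F0 ×ˢ (F1 ×ˢ F2)).card :=
    Finset.card_le_card_of_injOn _ hmaps hinj
  have hIcc : (Icc 1 k).card = k := by rw [Nat.card_Icc]; omega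
  have hprod : (F0 ×ˢ (F1 ×ˢ F2)).card = F0.card * (F1.card * F2.card) := by
    rw [Finset.card_product, Finset.card_product]
  have c0 : F0.card ≤ b - 1 := by
    have hsub : F0 ⊆ ((range b).erase 0).image (fun d => d * (d - 1)) := by
      intro x hx
      obtain ⟨d, hd, rfl⟩ := Finset.mem_image.mp hx
      rcases eq_or_ne d 0 with rfl | hd0
      · exact Finset.mem_image.mpr ⟨1, Finset.mem_erase.mpr
          ⟨one_ne_zero, Finset.mem_range.mpr (by omega)⟩, by norm_num⟩
      · exact Finset.mem_image.mpr ⟨d, Finset.mem_erase.mpr ⟨hd0, hd⟩, rfl⟩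
    calc F0.card ≤ (((range b).erase 0).image (fun d => d * (d - 1))).card :=
          Finset.card_le_card hsub
      _ ≤ ((range b).erase 0).card := Finset.card_image_le
      _ = b - 1 := by rw [Finset.card_erase_of_mem (Finset.mem_range.mpr hb0), Finset.card_range]
  have c1 : F1.card ≤ b / 2 + 1 := le_trans Finset.card_image_le (by simp)
  have c2 : F2.card ≤ b := le_trans Finset.card_image_le (by simp)
  have hkN : k ≤ (b - 1) * ((b / 2 + 1) * b) := by
    have := hcard
    rw [hIcc, hprod] at this
    exact le_trans this (Nat.mul_le_mul c0 (Nat.mul_le_mul c1 c2))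
  -- transfer to ℚ
  have hkQ : (k : ℚ) ≤ ((b:ℚ) - 1) * (((b / 2 : ℕ) : ℚ) + 1) * (b : ℚ) := by
    have h1 : (k : ℚ) ≤ (((b - 1) * ((b / 2 + 1) * b) : ℕ) : ℚ) := Nat.cast_le.mpr hkN
    push_cast [Nat.cast_sub (by omega : 1 ≤ b)] at h1
    linarith
  have huQ : 2 * ((b / 2 : ℕ) : ℚ) ≤ (b : ℚ) := by
    have : 2 * (b / 2) ≤ b := by omega
    exact_mod_cast this
  have hbQ : (2:ℚ) ≤ (b:ℚ) := by exact_mod_cast hb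
  have h1 : (0:ℚ) ≤ ((b:ℚ) - 1) * (b:ℚ) * ((b:ℚ) - 2 * ((b / 2 : ℕ) : ℚ)) := by
    apply mul_nonneg (mul_nonneg (by linarith) (by positivity))
    linarith
  nlinarith [hkQ, h1]
end

section
/- Fix b ≥ 2 and c ≥ 0. If a is a fixed point of S_{[c,b]} and a is a multiple of b, then a + 1 is also a fixed point of S_{[c,b]}. -/
theorem stmt_15 (b c a : ℕ) (hb : 2 ≤ b) (ha : 0 < a)
    (hfix : S c b a = a) (hdvd : b ∣ a) : S c b (a + 1) = a + 1 := by
  have hb1 : 1 < b := hb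
  obtain ⟨k, rfl⟩ := hdvd
  have hmod : b * k % b = 0 := Nat.mul_mod_right b k
  have h1 : (b * k + 1) % b = 1 := by
    simp [Nat.add_mod, hmod, Nat.mod_eq_of_lt hb1]
  have h2 : (b * k + 1) / b = k := by
    rw [add_comm, Nat.add_mul_div_left _ _ (by omega : 0 < b), Nat.div_eq_of_lt hb1, zero_add]
  have d1 : Nat.digits b (b * k) = 0 :: Nat.digits b k := by
    rw [Nat.digits_def' hb1 ha, hmod, Nat.mul_div_cancel_left k (by omega)]
  have d2 : Nat.digits b (b * k + 1) = 1 :: Nat.digits b k := by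
    rw [Nat.digits_def' hb1 (by omega), h1, h2]
  simp only [S, d1, d2, List.map_cons, List.sum_cons] at hfix ⊢
  omega
end

section
/- Fix b ≥ 2 and c ≥ 0. If a is a fixed point of S_{[c,b]} whose second base-b digit (the coefficient of b in its base-b expansion) equals d with 1 ≤ d ≤ b−1, then the number obtained from a by replacing that digit with b − d, namely a + (b − 2d)·b, is also a fixed point of S_{[c,b]}. -/
theorem stmt_16 (b c a d : ℕ) (hb : 2 ≤ b) (ha : 0 < a)
    (hfix : S c b a = a)
    (hd : (Nat.digits b a).getD 1 0 = d) (hd1 : 1 ≤ d) (hd2 : d ≤ b - 1) :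
    S c b (a - d * b + (b - d) * b) = a - d * b + (b - d) * b := by
  have hb1 : 1 < b := by omega
  rcases hdig : Nat.digits b a with _ | ⟨a0, rest⟩
  · rw [hdig] at hd; simp at hd; omega
  rcases rest with _ | ⟨dd, L⟩
  · rw [hdig] at hd; simp at hd; omega
  rw [hdig] at hd
  simp at hd
  subst hd
  rename' dd => d
  have hval := Nat.ofDigits_digits b a
  rw [hdig, Nat.ofDigits_cons, Nat.ofDigits_cons] at hval
  set r : ℕ := Nat.ofDigits b L with hr
  have hlt : ∀ x ∈ Nat.digits b a, x < b := fun x hx => Nat.digits_lt_base hb1 hx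
  rw [hdig] at hlt
  have ha0 : a0 < b := hlt a0 (by simp)
  have hdb : d < b := hlt d (by simp)
  have hLlt : ∀ x ∈ L, x < b := fun x hx => hlt x (by simp [hx])
  have hlast := Nat.getLast_digit_ne_zero b ha.ne'
  simp only [hdig] at hlast
  obtain ⟨e, he⟩ := Nat.exists_eq_add_of_le hdb.le
  have hbd : b - d = e := by omega
  have he1 : 1 ≤ e := by omega
  rw [hbd]
  have hdig' : Nat.digits b (Nat.ofDigits b (a0 :: e :: L)) = a0 :: e :: L := by
    apply Nat.digits_ofDigits b hb1
    · intro x hx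
      simp only [List.mem_cons] at hx
      rcases hx with rfl | rfl | h
      · exact ha0
      · omega
      · exact hLlt x h
    · intro h
      rw [List.getLast_cons (by simp)]
      rcases L with _ | ⟨y, M⟩
      · simp; omega
      · rw [List.getLast_cons (by simp)]
        rw [List.getLast_cons (by simp), List.getLast_cons (by simp)] at hlast
        exact hlast
  have hval' : Nat.ofDigits b (a0 :: e :: L) = a0 + b * (e + b * r) := by
    rw [Nat.ofDigits_cons, Nat.ofDigits_cons]
  have h1 : b * (d + b * r) = d * b + b * (b * r) := by ring
  have h2 : b * (e + b * r) = e * b + b * (b * r) := by ring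
  have heq : a - d * b + e * b = Nat.ofDigits b (a0 :: e :: L) := by
    rw [hval']; omega
  rw [heq, S, hdig']
  have hS : S c b a = c + (a0 ^ 2 + (d ^ 2 + (L.map (· ^ 2)).sum)) := by
    rw [S, hdig]; simp
  rw [hfix] at hS
  simp only [List.map_cons, List.sum_cons]
  rw [hval']
  have key : e ^ 2 + d * b = d ^ 2 + e * b := by subst he; ring
  have hA : a = a0 + b * (d + b * r) := hval.symm
  omega
end
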